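/- Let λ ∈ X, let λ⁺ be the unique dominant weight in the W-orbit of λ, and let w ∈ W be the element of minimal length with λ = wλ⁺. Then λ is a Steinberg weight (i.e. λ = e_v for some v ∈ W; in that case necessarily v = w⁻¹) if and only if (λ⁺, α_j∨) ≤ 1 for every simple root α_j and, whenever (λ⁺, α_j∨) = 1, the root w(α_j) is negative. -/

import Mathlib

open scoped InnerProductSpace Classical

noncomputable section

/-- A reduced crystallographic root system `Φ` spanning a finite-dimensional real inner
product space `V`, together with a choice of simple roots `π` (determining the positive
system), the corresponding fundamental weights `ω`, the reflections `s`, the Weyl group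
`W` and the weight lattice `X`. -/
structure RootSystemData (V : Type) [NormedAddCommGroup V] [InnerProductSpace ℝ V]
    [FiniteDimensional ℝ V] where
  /-- the (finite) set of roots -/
  Φ : Finset V
  /-- the rank -/
  r : ℕ
  /-- the simple roots `α₁, …, α_r` -/
  π : Fin r → V
  /-- the fundamental weights `ω₁, …, ω_r` -/
  ω : Fin r → V
  /-- the orthogonal reflection attached to a root -/
  s : V → (V ≃ₗ[ℝ] V)
  /-- the Weyl group -/
  W : Subgroup (V ≃ₗ[ℝ] V)
  /-- the weight lattice -/
  X : AddSubgroup V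
  root_ne_zero : ∀ α ∈ Φ, α ≠ (0 : V)
  root_span : Submodule.span ℝ (Φ : Set V) = ⊤
  reduced : ∀ α ∈ Φ, ∀ c : ℝ, c • α ∈ Φ → c = 1 ∨ c = -1
  crystallographic : ∀ α ∈ Φ, ∀ β ∈ Φ, ∃ n : ℤ, 2 * ⟪β, α⟫_ℝ / ⟪α, α⟫_ℝ = (n : ℝ)
  s_apply : ∀ α ∈ Φ, ∀ v : V, s α v = v - (2 * ⟪v, α⟫_ℝ / ⟪α, α⟫_ℝ) • α
  refl_stable : ∀ α ∈ Φ, ∀ β ∈ Φ, s α β ∈ Φ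
  W_eq : W = Subgroup.closure {g : V ≃ₗ[ℝ] V | ∃ α ∈ Φ, g = s α}
  inner_invariant : ∀ g ∈ W, ∀ u v : V, ⟪g u, g v⟫_ℝ = ⟪u, v⟫_ℝ
  simple_mem : ∀ i, π i ∈ Φ
  simple_indep : LinearIndependent ℝ π
  pos_or_neg : ∀ α ∈ Φ,
      (∃ c : Fin r → ℝ, (∀ i, 0 ≤ c i) ∧ α = ∑ i, c i • π i) ∨
      (∃ c : Fin r → ℝ, (∀ i, 0 ≤ c i) ∧ -α = ∑ i, c i • π i)
  fund : ∀ i j, 2 * ⟪ω i, π j⟫_ℝ / ⟪π j, π j⟫_ℝ = if i = j then (1 : ℝ) else 0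
  X_eq : X = AddSubgroup.closure (Set.range ω)
  X_stable : ∀ g ∈ W, ∀ x ∈ X, g x ∈ X

/-- The pairing `(v, α∨) = 2(v,α)/(α,α)` of a vector with the coroot of `α`. -/
def pairing {V : Type} [NormedAddCommGroup V] [InnerProductSpace ℝ V]
    (v α : V) : ℝ := 2 * ⟪v, α⟫_ℝ / ⟪α, α⟫_ℝ

namespace RootSystemData

variable {V : Type} [NormedAddCommGroup V] [InnerProductSpace ℝ V] [FiniteDimensional ℝ V]
variable (C : RootSystemData V)

/-- `α` is a nonnegative combination of the simple roots (a positive root, if `α ∈ Φ`). -/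
def IsPos (α : V) : Prop := ∃ c : Fin C.r → ℝ, (∀ i, 0 ≤ c i) ∧ α = ∑ i, c i • C.π i

/-- `α` is a nonpositive combination of the simple roots (a negative root, if `α ∈ Φ`). -/
def IsNeg (α : V) : Prop := C.IsPos (-α)

/-- A weight is dominant if it pairs nonnegatively with all simple coroots. -/
def IsDominant (lam : V) : Prop := ∀ i, 0 ≤ pairing lam (C.π i)

/-- The product of the simple reflections along a word. -/
def wordProd (l : List (Fin C.r)) : V ≃ₗ[ℝ] V := (l.map fun i => C.s (C.π i)).prod

/-- The length of `w`: the least length of an expression of `w` as a product of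
simple reflections. -/
def length (w : V ≃ₗ[ℝ] V) : ℕ :=
  sInf {n | ∃ l : List (Fin C.r), l.length = n ∧ C.wordProd l = w}

/-- The (strong) Bruhat order on the Weyl group: `u ≤ v` iff `v` is obtained from `u`
by successively multiplying by reflections, increasing the length at each step. -/
def BruhatLE (u v : V ≃ₗ[ℝ] V) : Prop :=
  Relation.ReflTransGen
    (fun a b => (∃ α ∈ C.Φ, b = a * C.s α) ∧ C.length a < C.length b) u v

/-- The Steinberg weight `e_v = v⁻¹ ⬝ ∑_{i : v⁻¹ α_i < 0} ω_i`. -/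
def steinberg (v : V ≃ₗ[ℝ] V) : V :=
  v⁻¹ (∑ i ∈ Finset.univ.filter (fun i => C.IsNeg (v⁻¹ (C.π i))), C.ω i)

/-- The excellent order on weights: `λ ≤ₑ μ` iff `(λ,λ) < (μ,μ)`, or `λ = wν`, `μ = zν`
for some dominant `ν ∈ X` and `w ≤ z` in the Bruhat order. -/
def ExcLE (lam mu : V) : Prop :=
  ⟪lam, lam⟫_ℝ < ⟪mu, mu⟫_ℝ ∨
    ∃ nu ∈ C.X, C.IsDominant nu ∧
      ∃ w ∈ C.W, ∃ z ∈ C.W, C.BruhatLE w z ∧ lam = w nu ∧ mu = z nu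

/-- The strict excellent order. -/
def ExcLT (lam mu : V) : Prop := C.ExcLE lam mu ∧ lam ≠ mu

/-- The antipodal excellent order: `λ ≤ₐ μ` iff `-λ ≤ₑ -μ`. -/
def AntiLE (lam mu : V) : Prop := C.ExcLE (-lam) (-mu)

/-- The strict antipodal excellent order. -/
def AntiLT (lam mu : V) : Prop := C.AntiLE lam mu ∧ lam ≠ mu

/-- The dominance order: `μ ≤_d ν` iff `ν - μ` is a nonnegative integer combination of
the positive roots. -/
def DomLE (mu nu : V) : Prop :=
  ∃ c : V → ℕ, nu - mu = ∑ α ∈ C.Φ.filter (fun a => C.IsPos a), (c α : ℝ) • α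

theorem omega_mem (i : Fin C.r) : C.ω i ∈ C.X := by
  rw [C.X_eq]; exact AddSubgroup.subset_closure ⟨i, rfl⟩

theorem steinberg_mem {v : V ≃ₗ[ℝ] V} (hv : v ∈ C.W) : C.steinberg v ∈ C.X :=
  C.X_stable _ (inv_mem hv) _ (AddSubgroup.sum_mem _ fun i _ => C.omega_mem i)

/-- The group ring `ℤ[X]` of the weight lattice. -/
abbrev GroupRing := AddMonoidAlgebra ℤ ↥C.X

/-- The basis element `e^λ` of `ℤ[X]`. -/
def expo (x : V) (hx : x ∈ C.X) : C.GroupRing := AddMonoidAlgebra.single ⟨x, hx⟩ 1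

/-- `e^λ`, defined for all `λ : V` (and zero off the lattice). -/
def expoOf (x : V) : C.GroupRing := if hx : x ∈ C.X then C.expo x hx else 0

/-- The coefficient of `e^x` in an element of `ℤ[X]`. -/
def coeff (m : C.GroupRing) (x : ↥C.X) : ℤ := (AddMonoidAlgebra.coeff m : ↥C.X →₀ ℤ) x

/-- The support of an element of `ℤ[X]`. -/
def supp (m : C.GroupRing) : Finset ↥C.X := (AddMonoidAlgebra.coeff m : ↥C.X →₀ ℤ).support

/-- The action of `g ∈ W` on the weight lattice. -/
def actX (g : V ≃ₗ[ℝ] V) (hg : g ∈ C.W) : ↥C.X → ↥C.X :=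
  fun x => ⟨g x, C.X_stable g hg x.1 x.2⟩

/-- The action of `g ∈ W` on `ℤ[X]`, with `e^λ ↦ e^{gλ}`. -/
def wAct (g : V ≃ₗ[ℝ] V) (hg : g ∈ C.W) (m : C.GroupRing) : C.GroupRing :=
  AddMonoidAlgebra.ofCoeff (Finsupp.mapDomain (C.actX g hg) (AddMonoidAlgebra.coeff m))

/-- `m` lies in the invariant subring `ℤ[X]^W`. -/
def IsWInvariant (m : C.GroupRing) : Prop := ∀ g (hg : g ∈ C.W), C.wAct g hg m = m

/-- The parabolic subgroup `W_{Π'}` generated by the simple reflections `s_α, α ∈ Π'`,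
for a subset `Π'` of the simple roots (given by a subset `J` of the index set). -/
def parabolicSubgroup (J : Set (Fin C.r)) : Subgroup (V ≃ₗ[ℝ] V) :=
  Subgroup.closure {g | ∃ i ∈ J, g = C.s (C.π i)}

theorem parabolic_le (J : Set (Fin C.r)) : C.parabolicSubgroup J ≤ C.W := by
  refine (Subgroup.closure_le _).2 ?_
  rintro g ⟨i, _, rfl⟩
  rw [C.W_eq]
  exact Subgroup.subset_closure ⟨C.π i, C.simple_mem i, rfl⟩

/-- `m` lies in the invariant subring `ℤ[X]^H` for a subgroup `H ≤ W`. -/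
def IsInvariantUnder (H : Subgroup (V ≃ₗ[ℝ] V)) (hH : H ≤ C.W) (m : C.GroupRing) : Prop :=
  ∀ g (hg : g ∈ H), C.wAct g (hH hg) m = m

/-- `v` is of minimal length in its coset `v ⬝ W_{Π'}`. -/
def IsMinCosetRep (J : Set (Fin C.r)) (v : V ≃ₗ[ℝ] V) : Prop :=
  v ∈ C.W ∧ ∀ z ∈ C.parabolicSubgroup J, C.length v ≤ C.length (v * z)

/-- The subgroup generated by the simple reflections fixing a given vector. -/
def fixSubgroup (x : V) : Subgroup (V ≃ₗ[ℝ] V) :=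
  Subgroup.closure {g | ∃ i : Fin C.r, C.s (C.π i) x = x ∧ g = C.s (C.π i)}

end RootSystemData

/-!
Put `μ_u = ∑_{u αᵢ < 0} ωᵢ`, a dominant weight with `(μ_u, αⱼ∨) ∈ {0, 1}`, equal to `1`
exactly at the descents of `u`; then `e_{u⁻¹} = u μ_u`.

By the exchange condition, `ℓ(u sᵢ) < ℓ(u)` whenever `u αᵢ < 0`, and every `u ≠ 1` has such
a descent. Hence the minimal `w` sends every simple root orthogonal to `λ⁺` to a positive root,
and two elements `u, w` with this property and `u λ⁺ = w λ⁺` coincide: a descent `αᵢ` of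
`u⁻¹ w` would be orthogonal to `λ⁺`, and `w αᵢ = u (u⁻¹ w αᵢ)` would be both positive and
negative. The same descent argument shows that a `W`-orbit contains only one dominant weight.

If `λ = e_v`, put `u = v⁻¹`: then `μ_u = λ⁺`, and `u` has the property above because a simple
root orthogonal to `μ_u` is not a descent of `u`; so `u = w` and `λ⁺ = μ_w`, whose pairings
give the stated conditions. Conversely, under these conditions the pairings of the integral
weight `λ⁺` are `0` or `1`, equal to `1` exactly at the descents of `w`, so `λ⁺ = μ_w` and
`λ = e_{w⁻¹}`.
-/

section

variable {V : Type} [NormedAddCommGroup V] [InnerProductSpace ℝ V]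

lemma pairing_add (x y α : V) : pairing (x + y) α = pairing x α + pairing y α := by
  simp only [pairing, inner_add_left, mul_add, add_div]

lemma pairing_neg (x α : V) : pairing (-x) α = -pairing x α := by
  simp only [pairing, inner_neg_left, mul_neg, neg_div]

lemma pairing_sum {ι : Type*} (s : Finset ι) (x : ι → V) (α : V) :
    pairing (∑ i ∈ s, x i) α = ∑ i ∈ s, pairing (x i) α := by
  simp only [pairing, sum_inner, Finset.mul_sum, Finset.sum_div]

end

namespace RootSystemData

variable {V : Type} [NormedAddCommGroup V] [InnerProductSpace ℝ V] [FiniteDimensional ℝ V]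
variable (C : RootSystemData V)

lemma inner_self_pos {α : V} (hα : α ∈ C.Φ) : 0 < ⟪α, α⟫_ℝ :=
  real_inner_self_pos.2 (C.root_ne_zero α hα)

lemma map_simple_ne_zero (g : V ≃ₗ[ℝ] V) (i : Fin C.r) : g (C.π i) ≠ 0 :=
  g.map_ne_zero_iff.2 (C.root_ne_zero _ (C.simple_mem i))

lemma pairing_simple_eq_zero_iff {μ : V} (i : Fin C.r) :
    pairing μ (C.π i) = 0 ↔ ⟪μ, C.π i⟫_ℝ = 0 := by
  simp [pairing, C.root_ne_zero _ (C.simple_mem i)]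

lemma coeffs_eq_of_sum_eq {a b : Fin C.r → ℝ}
    (h : ∑ i, a i • C.π i = ∑ i, b i • C.π i) : a = b := by
  funext i
  have h0 := Fintype.linearIndependent_iff.1 C.simple_indep (a - b)
    (by simp [sub_smul, Finset.sum_sub_distrib, h])
  exact sub_eq_zero.1 (h0 i)

lemma isPos_zero : C.IsPos 0 := ⟨0, fun _ => le_rfl, by simp⟩

variable {C} in
lemma IsPos.add {α β : V} (hα : C.IsPos α) (hβ : C.IsPos β) : C.IsPos (α + β) := by
  obtain ⟨c, hc, rfl⟩ := hα
  obtain ⟨d, hd, rfl⟩ := hβ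
  exact ⟨c + d, fun i => add_nonneg (hc i) (hd i), by simp [add_smul, Finset.sum_add_distrib]⟩

variable {C} in
lemma IsPos.smul {α : V} (hα : C.IsPos α) {t : ℝ} (ht : 0 ≤ t) : C.IsPos (t • α) := by
  obtain ⟨c, hc, rfl⟩ := hα
  exact ⟨t • c, fun i => mul_nonneg ht (hc i), by simp [Finset.smul_sum, smul_smul]⟩

lemma isPos_sum {ι : Type*} (s : Finset ι) {f : ι → V} (h : ∀ i ∈ s, C.IsPos (f i)) :
    C.IsPos (∑ i ∈ s, f i) :=
  Finset.sum_induction f C.IsPos (fun _ _ => IsPos.add) C.isPos_zero h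

lemma isPos_simple (i : Fin C.r) : C.IsPos (C.π i) :=
  ⟨Pi.single i 1, fun j => by by_cases h : j = i <;> simp [h], by simp [Pi.single_apply]⟩

lemma eq_zero_of_isPos_of_isNeg {α : V} (hp : C.IsPos α) (hn : C.IsNeg α) : α = 0 := by
  obtain ⟨c, hc, rfl⟩ := hp
  obtain ⟨d, hd, hcd⟩ := hn
  have h0 : c + d = 0 := C.coeffs_eq_of_sum_eq (by simp [add_smul, Finset.sum_add_distrib, ← hcd])
  have hc0 : c = 0 := funext fun i => by
    have := congrFun h0 i
    simp only [Pi.add_apply, Pi.zero_apply] at this ⊢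
    linarith [hc i, hd i]
  simp [hc0]

lemma not_isNeg_of_isPos {α : V} (hα : α ≠ 0) (hp : C.IsPos α) : ¬ C.IsNeg α :=
  fun hn => hα (C.eq_zero_of_isPos_of_isNeg hp hn)

lemma isPos_or_isNeg {α : V} (hα : α ∈ C.Φ) : C.IsPos α ∨ C.IsNeg α :=
  C.pos_or_neg α hα

lemma s_apply_self {α : V} (hα : α ∈ C.Φ) : C.s α α = -α := by
  rw [C.s_apply α hα, mul_div_assoc, div_self (C.inner_self_pos hα).ne']
  module

lemma s_apply_of_inner_eq_zero {α μ : V} (hα : α ∈ C.Φ) (h : ⟪μ, α⟫_ℝ = 0) : C.s α μ = μ := by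
  simp [C.s_apply α hα, h]

lemma s_s_apply {α : V} (hα : α ∈ C.Φ) (v : V) : C.s α (C.s α v) = v := by
  have h : ⟪α, α⟫_ℝ ≠ 0 := (C.inner_self_pos hα).ne'
  rw [C.s_apply α hα v, C.s_apply α hα, inner_sub_left, real_inner_smul_left]
  field_simp
  module

lemma s_mul_self {α : V} (hα : α ∈ C.Φ) : C.s α * C.s α = 1 :=
  LinearEquiv.ext (C.s_s_apply hα)

lemma s_inv {α : V} (hα : α ∈ C.Φ) : (C.s α)⁻¹ = C.s α :=
  inv_eq_of_mul_eq_one_right (C.s_mul_self hα)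

lemma s_mem_W {α : V} (hα : α ∈ C.Φ) : C.s α ∈ C.W := by
  rw [C.W_eq]
  exact Subgroup.subset_closure ⟨α, hα, rfl⟩

lemma map_mem_roots {g : V ≃ₗ[ℝ] V} (hg : g ∈ C.W) {α : V} (hα : α ∈ C.Φ) : g α ∈ C.Φ := by
  rw [C.W_eq] at hg
  induction hg using Subgroup.closure_induction'' generalizing α with
  | mem _ hx =>
    obtain ⟨β, hβ, rfl⟩ := hx
    exact C.refl_stable β hβ α hα
  | inv_mem _ hx =>
    obtain ⟨β, hβ, rfl⟩ := hx
    rw [C.s_inv hβ]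
    exact C.refl_stable β hβ α hα
  | one => exact hα
  | mul _ _ _ _ hx hy => exact hx (hy hα)

lemma mul_s_mul_inv {g : V ≃ₗ[ℝ] V} (hg : g ∈ C.W) {α : V} (hα : α ∈ C.Φ) :
    g * C.s α * g⁻¹ = C.s (g α) := by
  ext v
  have hv : ⟪g⁻¹ v, α⟫_ℝ = ⟪v, g α⟫_ℝ := by
    simpa using (C.inner_invariant g hg (g⁻¹ v) α).symm
  rw [LinearEquiv.mul_apply, LinearEquiv.mul_apply, C.s_apply α hα, C.s_apply _ (C.map_mem_roots hg hα),
    map_sub, map_smul, hv, C.inner_invariant g hg α α]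
  simp

lemma span_simple_eq_top : Submodule.span ℝ (Set.range C.π) = ⊤ := by
  have hcomb : ∀ c : Fin C.r → ℝ, ∑ i, c i • C.π i ∈ Submodule.span ℝ (Set.range C.π) :=
    fun c => Submodule.sum_mem _ fun i _ =>
      Submodule.smul_mem _ _ (Submodule.subset_span ⟨i, rfl⟩)
  refine eq_top_iff.2 (C.root_span ▸ Submodule.span_le.2 fun α hα => ?_)
  rcases C.pos_or_neg α hα with ⟨c, _, hc⟩ | ⟨c, _, hc⟩
  · exact hc ▸ hcomb c
  · simpa [← hc] using neg_mem (hcomb c)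

def simpleBasis : Module.Basis (Fin C.r) ℝ V :=
  Module.Basis.mk C.simple_indep C.span_simple_eq_top.ge

@[simp] lemma simpleBasis_apply (i : Fin C.r) : C.simpleBasis i = C.π i :=
  Module.Basis.mk_apply _ _ i

def height : V →ₗ[ℝ] ℝ := C.simpleBasis.sumCoords

lemma height_simple (i : Fin C.r) : C.height (C.π i) = 1 := by
  rw [height, ← C.simpleBasis_apply]
  exact C.simpleBasis.sumCoords_self_apply i

lemma height_s_simple_lt {β : V} {i : Fin C.r} (h : 0 < ⟪β, C.π i⟫_ℝ) :
    C.height (C.s (C.π i) β) < C.height β := by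
  rw [C.s_apply _ (C.simple_mem i), map_sub, map_smul, height_simple, smul_eq_mul, mul_one]
  have := div_pos (mul_pos two_pos h) (C.inner_self_pos (C.simple_mem i))
  linarith

lemma exists_inner_simple_pos {β : V} (hβ : β ∈ C.Φ) (hpos : C.IsPos β) :
    ∃ i, 0 < ⟪β, C.π i⟫_ℝ := by
  by_contra! h
  obtain ⟨c, hc, hβc⟩ := hpos
  have : ⟪β, β⟫_ℝ ≤ 0 := by
    nth_rw 2 [hβc]
    rw [inner_sum]
    exact Finset.sum_nonpos fun i _ => by
      rw [real_inner_smul_right]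
      exact mul_nonpos_of_nonneg_of_nonpos (hc i) (h i)
  exact (C.inner_self_pos hβ).not_ge this

lemma isPos_s_simple {i : Fin C.r} {β : V} (hβ : β ∈ C.Φ) (hpos : C.IsPos β)
    (hne : β ≠ C.π i) : C.IsPos (C.s (C.π i) β) := by
  refine (C.isPos_or_isNeg (C.refl_stable _ (C.simple_mem i) _ hβ)).resolve_right
    fun hneg => hne ?_
  -- `sᵢ` only changes the `αᵢ`-coordinate, so a negative `sᵢ β` forces `β ∈ ℝ αᵢ`.
  obtain ⟨c, hc, rfl⟩ := hpos
  obtain ⟨d, hd, hcd⟩ := hneg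
  rw [C.s_apply _ (C.simple_mem i)] at hcd
  set k := 2 * ⟪∑ j, c j • C.π j, C.π i⟫_ℝ / ⟪C.π i, C.π i⟫_ℝ
  have hcoef : c + d = k • Pi.single i 1 := C.coeffs_eq_of_sum_eq (by
    simp [add_smul, Finset.sum_add_distrib, ← hcd, Pi.single_apply, ite_smul])
  have hc0 : ∀ j ≠ i, c j = 0 := fun j hj => by
    have := congrFun hcoef j
    simp only [Pi.add_apply, Pi.smul_apply, Pi.single_apply, hj, if_false, smul_zero] at this
    linarith [hc j, hd j]
  have hβ' : ∑ j, c j • C.π j = c i • C.π i :=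
    Finset.sum_eq_single i (fun j _ hj => by simp [hc0 j hj]) (by simp)
  rw [hβ'] at hβ ⊢
  rcases C.reduced _ (C.simple_mem i) _ hβ with h | h
  · simp [h]
  · linarith [hc i]

lemma wordProd_nil : C.wordProd [] = 1 := rfl

lemma wordProd_cons (i : Fin C.r) (l : List (Fin C.r)) :
    C.wordProd (i :: l) = C.s (C.π i) * C.wordProd l := by
  simp [wordProd]

lemma wordProd_append (l l' : List (Fin C.r)) :
    C.wordProd (l ++ l') = C.wordProd l * C.wordProd l' := by
  simp [wordProd]

lemma wordProd_singleton (i : Fin C.r) : C.wordProd [i] = C.s (C.π i) := by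
  simp [wordProd]

lemma wordProd_reverse (l : List (Fin C.r)) :
    C.wordProd l.reverse = (C.wordProd l)⁻¹ := by
  induction l with
  | nil => simp [wordProd_nil]
  | cons i t ih =>
    rw [List.reverse_cons, C.wordProd_append, ih, C.wordProd_singleton, C.wordProd_cons,
      mul_inv_rev, C.s_inv (C.simple_mem i)]

lemma wordProd_mem (l : List (Fin C.r)) : C.wordProd l ∈ C.W := by
  induction l with
  | nil => exact one_mem _
  | cons i t ih =>
    rw [C.wordProd_cons]
    exact mul_mem (C.s_mem_W (C.simple_mem i)) ih

lemma exists_wordProd_apply_simple_of_isPos {β : V} (hβ : β ∈ C.Φ) (hpos : C.IsPos β) :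
    ∃ l i, β = C.wordProd l (C.π i) := by
  by_contra! hbad
  -- a counterexample of minimal height; some `sᵢ` lowers its height
  obtain ⟨γ, hγ, hmin⟩ := (C.Φ.filter fun γ => C.IsPos γ ∧ ∀ l i, γ ≠ C.wordProd l (C.π i)
    ).exists_min_image C.height ⟨β, Finset.mem_filter.2 ⟨hβ, hpos, hbad⟩⟩
  simp only [Finset.mem_filter] at hγ hmin
  obtain ⟨hγΦ, hγpos, hγbad⟩ := hγ
  obtain ⟨i, hi⟩ := C.exists_inner_simple_pos hγΦ hγpos
  obtain ⟨l, j, hl⟩ : ∃ l j, C.s (C.π i) γ = C.wordProd l (C.π j) := by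
    by_contra! h
    exact (C.height_s_simple_lt hi).not_ge (hmin _ ⟨C.refl_stable _ (C.simple_mem i) _ hγΦ,
      C.isPos_s_simple hγΦ hγpos (hγbad [] i), h⟩)
  refine hγbad (i :: l) j ?_
  rw [C.wordProd_cons, LinearEquiv.mul_apply, ← hl, C.s_s_apply (C.simple_mem i)]

lemma exists_wordProd_apply_simple {α : V} (hα : α ∈ C.Φ) :
    ∃ l i, α = C.wordProd l (C.π i) := by
  rcases C.isPos_or_isNeg hα with hpos | hneg
  · exact C.exists_wordProd_apply_simple_of_isPos hα hpos
  · obtain ⟨l, i, hl⟩ := C.exists_wordProd_apply_simple_of_isPos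
      (C.s_apply_self hα ▸ C.refl_stable α hα α hα) hneg
    refine ⟨l ++ [i], i, ?_⟩
    rw [C.wordProd_append, C.wordProd_singleton, LinearEquiv.mul_apply,
      C.s_apply_self (C.simple_mem i), map_neg, ← hl, neg_neg]

lemma exists_wordProd_eq_s {α : V} (hα : α ∈ C.Φ) : ∃ l, C.wordProd l = C.s α := by
  obtain ⟨l, i, rfl⟩ := C.exists_wordProd_apply_simple hα
  refine ⟨l ++ [i] ++ l.reverse, ?_⟩
  rw [← C.mul_s_mul_inv (C.wordProd_mem l) (C.simple_mem i), C.wordProd_append,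
    C.wordProd_append, C.wordProd_singleton, C.wordProd_reverse]

lemma exists_wordProd_eq {g : V ≃ₗ[ℝ] V} (hg : g ∈ C.W) : ∃ l, C.wordProd l = g := by
  rw [C.W_eq] at hg
  induction hg using Subgroup.closure_induction'' with
  | mem _ hx =>
    obtain ⟨α, hα, rfl⟩ := hx
    exact C.exists_wordProd_eq_s hα
  | inv_mem _ hx =>
    obtain ⟨α, hα, rfl⟩ := hx
    rw [C.s_inv hα]
    exact C.exists_wordProd_eq_s hα
  | one => exact ⟨[], rfl⟩
  | mul _ _ _ _ hx hy =>
    obtain ⟨l, rfl⟩ := hx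
    obtain ⟨l', rfl⟩ := hy
    exact ⟨l ++ l', C.wordProd_append l l'⟩

lemma length_wordProd_le (l : List (Fin C.r)) : C.length (C.wordProd l) ≤ l.length :=
  Nat.sInf_le ⟨l, rfl, rfl⟩

lemma exists_reduced_word {g : V ≃ₗ[ℝ] V} (hg : g ∈ C.W) :
    ∃ l, C.wordProd l = g ∧ l.length = C.length g := by
  obtain ⟨l, hl⟩ := C.exists_wordProd_eq hg
  obtain ⟨l', hlen, hl'⟩ :=
    Nat.sInf_mem (s := {n | ∃ l, l.length = n ∧ C.wordProd l = g}) ⟨_, l, rfl, hl⟩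
  exact ⟨l', hl', hlen⟩

lemma exists_shorter_word_of_isNeg (l : List (Fin C.r)) {i : Fin C.r}
    (h : C.IsNeg (C.wordProd l (C.π i))) :
    ∃ l', l'.length < l.length ∧ C.wordProd l' = C.wordProd l * C.s (C.π i) := by
  induction l with
  | nil => exact absurd h (C.not_isNeg_of_isPos (C.map_simple_ne_zero 1 i) (C.isPos_simple i))
  | cons j t ih =>
    rw [C.wordProd_cons, LinearEquiv.mul_apply] at h
    by_cases ht : C.IsNeg (C.wordProd t (C.π i))
    · obtain ⟨t', hlen, ht'⟩ := ih ht
      exact ⟨j :: t', by simpa using hlen, by rw [C.wordProd_cons, ht', C.wordProd_cons, mul_assoc]⟩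
    · have hroot := C.map_mem_roots (C.wordProd_mem t) (C.simple_mem i)
      have htj : C.wordProd t (C.π i) = C.π j := by
        by_contra hne
        refine C.not_isNeg_of_isPos ((C.s _).map_ne_zero_iff.2 (C.map_simple_ne_zero _ i))
          (C.isPos_s_simple hroot ((C.isPos_or_isNeg hroot).resolve_right ht) hne) h
      have hconj := C.mul_s_mul_inv (C.wordProd_mem t) (C.simple_mem i)
      rw [htj] at hconj
      refine ⟨t, by simp, ?_⟩
      rw [C.wordProd_cons, ← hconj, inv_mul_cancel_right, mul_assoc, C.s_mul_self (C.simple_mem i),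
        mul_one]

lemma length_mul_simple_lt {g : V ≃ₗ[ℝ] V} (hg : g ∈ C.W) {i : Fin C.r}
    (h : C.IsNeg (g (C.π i))) : C.length (g * C.s (C.π i)) < C.length g := by
  obtain ⟨l, rfl, hlen⟩ := C.exists_reduced_word hg
  obtain ⟨l', hl', hprod⟩ := C.exists_shorter_word_of_isNeg l h
  calc C.length (C.wordProd l * C.s (C.π i)) ≤ l'.length := hprod ▸ C.length_wordProd_le l'
    _ < C.length (C.wordProd l) := hlen ▸ hl'

lemma exists_isNeg_of_ne_one {g : V ≃ₗ[ℝ] V} (hg : g ∈ C.W) (hne : g ≠ 1) :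
    ∃ i, C.IsNeg (g (C.π i)) := by
  obtain ⟨l, rfl, hlen⟩ := C.exists_reduced_word hg
  rcases List.eq_nil_or_concat' l with rfl | ⟨t, i, rfl⟩
  · exact absurd C.wordProd_nil hne
  refine ⟨i, (C.isPos_or_isNeg (C.map_mem_roots hg (C.simple_mem i))).resolve_left fun hpos => ?_⟩
  have hneg : C.IsNeg (C.wordProd t (C.π i)) := by
    simpa [IsNeg, C.wordProd_append, C.wordProd_singleton, C.s_apply_self (C.simple_mem i)]
      using hpos
  have hlt := C.length_mul_simple_lt (C.wordProd_mem t) hneg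
  rw [← C.wordProd_singleton, ← C.wordProd_append] at hlt
  have := C.length_wordProd_le t
  simp only [List.length_append, List.length_singleton] at hlen
  omega

/-- For dominant `μ`, this characterizes the element of minimal length in `u ⬝ Stab_W(μ)`. -/
def PosOnOrthSimple (u : V ≃ₗ[ℝ] V) (μ : V) : Prop :=
  ∀ j, ⟪μ, C.π j⟫_ℝ = 0 → C.IsPos (u (C.π j))

lemma posOnOrthSimple_of_length_minimal {w : V ≃ₗ[ℝ] V} (hw : w ∈ C.W) {μ : V}
    (hmin : ∀ u ∈ C.W, u μ = w μ → C.length w ≤ C.length u) : C.PosOnOrthSimple w μ := by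
  intro i hi
  refine (C.isPos_or_isNeg (C.map_mem_roots hw (C.simple_mem i))).resolve_right fun hneg => ?_
  have hfix : (w * C.s (C.π i)) μ = w μ := by
    rw [LinearEquiv.mul_apply, C.s_apply_of_inner_eq_zero (C.simple_mem i) hi]
  exact (C.length_mul_simple_lt hw hneg).not_ge
    (hmin _ (mul_mem hw (C.s_mem_W (C.simple_mem i))) hfix)

variable {C} in
lemma IsDominant.inner_simple_nonneg {μ : V} (hμ : C.IsDominant μ) (i : Fin C.r) :
    0 ≤ ⟪μ, C.π i⟫_ℝ := by
  have hp := C.inner_self_pos (C.simple_mem i)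
  have := mul_nonneg (hμ i) hp.le
  rw [pairing, div_mul_cancel₀ _ hp.ne'] at this
  linarith

variable {C} in
lemma IsDominant.inner_nonneg {μ β : V} (hμ : C.IsDominant μ) (hβ : C.IsPos β) :
    0 ≤ ⟪μ, β⟫_ℝ := by
  obtain ⟨c, hc, rfl⟩ := hβ
  rw [inner_sum]
  exact Finset.sum_nonneg fun i _ => by
    rw [real_inner_smul_right]
    exact mul_nonneg (hc i) (hμ.inner_simple_nonneg i)

variable {C} in
lemma IsDominant.inner_nonpos {μ β : V} (hμ : C.IsDominant μ) (hβ : C.IsNeg β) :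
    ⟪μ, β⟫_ℝ ≤ 0 := by
  simpa [inner_neg_right] using hμ.inner_nonneg hβ

lemma inner_simple_eq_zero_of_isNeg {g : V ≃ₗ[ℝ] V} (hg : g ∈ C.W) {μ : V}
    (hμ : C.IsDominant μ) (hgμ : C.IsDominant (g μ)) {i : Fin C.r} (h : C.IsNeg (g (C.π i))) :
    ⟪μ, C.π i⟫_ℝ = 0 :=
  le_antisymm (C.inner_invariant g hg μ (C.π i) ▸ hgμ.inner_nonpos h)
    (hμ.inner_simple_nonneg i)

lemma eq_of_isDominant_of_apply_eq {g : V ≃ₗ[ℝ] V} (hg : g ∈ C.W) {μ ν : V}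
    (hμ : C.IsDominant μ) (hν : C.IsDominant ν) (h : g μ = ν) : μ = ν := by
  obtain ⟨u, ⟨hu, huμ⟩, humin⟩ :=
    exists_minimalFor_of_wellFoundedLT (fun u => u ∈ C.W ∧ u μ = ν) C.length ⟨g, hg, h⟩
  have hmin : ∀ u' ∈ C.W, u' μ = u μ → C.length u ≤ C.length u' := fun u' hu' h' => by
    by_contra! hlt
    exact hlt.not_ge (humin ⟨hu', h'.trans huμ⟩ hlt.le)
  by_cases h1 : u = 1
  · simpa [h1] using huμ
  obtain ⟨i, hi⟩ := C.exists_isNeg_of_ne_one hu h1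
  have h0 := C.inner_simple_eq_zero_of_isNeg hu hμ (huμ ▸ hν) hi
  exact (C.not_isNeg_of_isPos (C.map_simple_ne_zero u i)
    (C.posOnOrthSimple_of_length_minimal hu hmin i h0) hi).elim

variable {C} in
lemma PosOnOrthSimple.isPos_apply {u : V ≃ₗ[ℝ] V} {μ β : V} (hu : C.PosOnOrthSimple u μ)
    (hμ : C.IsDominant μ) (hβ : C.IsPos β) (hβμ : ⟪μ, β⟫_ℝ = 0) : C.IsPos (u β) := by
  obtain ⟨c, hc, rfl⟩ := hβ
  rw [inner_sum] at hβμ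
  simp_rw [real_inner_smul_right] at hβμ
  have hterm := (Finset.sum_eq_zero_iff_of_nonneg fun i _ =>
    mul_nonneg (hc i) (hμ.inner_simple_nonneg i)).1 hβμ
  rw [map_sum]
  refine C.isPos_sum _ fun i _ => ?_
  rw [map_smul]
  rcases mul_eq_zero.1 (hterm i (Finset.mem_univ i)) with h | h
  · rw [h, zero_smul]
    exact C.isPos_zero
  · exact (hu i h).smul (hc i)

variable {C} in
lemma PosOnOrthSimple.eq {u w : V ≃ₗ[ℝ] V} (hu : u ∈ C.W) (hw : w ∈ C.W) {μ : V}
    (hμ : C.IsDominant μ) (h : u μ = w μ) (hQu : C.PosOnOrthSimple u μ)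
    (hQw : C.PosOnOrthSimple w μ) : u = w := by
  set g := u⁻¹ * w
  have hg : g ∈ C.W := mul_mem (inv_mem hu) hw
  have hgμ : g μ = μ := by simp [g, ← h]
  by_contra hne
  obtain ⟨i, hi⟩ := C.exists_isNeg_of_ne_one hg fun h1 => hne (inv_mul_eq_one.1 h1)
  have h0 := C.inner_simple_eq_zero_of_isNeg hg hμ (hgμ.symm ▸ hμ) hi
  have hpos : C.IsPos (u (-g (C.π i))) := hQu.isPos_apply hμ hi (by
    rw [inner_neg_right, ← hgμ, C.inner_invariant g hg, h0, neg_zero])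
  rw [map_neg, ← LinearEquiv.mul_apply, mul_inv_cancel_left] at hpos
  exact C.not_isNeg_of_isPos (C.map_simple_ne_zero w i) (hQw i h0) hpos

def descentWeight (u : V ≃ₗ[ℝ] V) : V :=
  ∑ i ∈ Finset.univ.filter (fun i => C.IsNeg (u (C.π i))), C.ω i

lemma steinberg_eq (v : V ≃ₗ[ℝ] V) : C.steinberg v = v⁻¹ (C.descentWeight v⁻¹) := rfl

lemma pairing_fund (i j : Fin C.r) : pairing (C.ω i) (C.π j) = if i = j then 1 else 0 :=
  C.fund i j

lemma pairing_descentWeight (u : V ≃ₗ[ℝ] V) (j : Fin C.r) :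
    pairing (C.descentWeight u) (C.π j) = if C.IsNeg (u (C.π j)) then 1 else 0 := by
  rw [descentWeight, pairing_sum]
  simp only [pairing_fund, Finset.sum_ite_eq', Finset.mem_filter, Finset.mem_univ, true_and]

lemma isDominant_descentWeight (u : V ≃ₗ[ℝ] V) : C.IsDominant (C.descentWeight u) := by
  intro j
  rw [C.pairing_descentWeight]
  split_ifs <;> norm_num

lemma exists_int_pairing_simple {x : V} (hx : x ∈ C.X) (j : Fin C.r) :
    ∃ n : ℤ, pairing x (C.π j) = n := by
  rw [C.X_eq] at hx
  induction hx using AddSubgroup.closure_induction with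
  | mem _ hy =>
    obtain ⟨i, rfl⟩ := hy
    exact ⟨if i = j then 1 else 0, by rw [C.pairing_fund]; split_ifs <;> simp⟩
  | zero => exact ⟨0, by simp [pairing]⟩
  | add x y _ _ hx hy =>
    obtain ⟨n, hn⟩ := hx
    obtain ⟨m, hm⟩ := hy
    exact ⟨n + m, by rw [pairing_add, hn, hm, Int.cast_add]⟩
  | neg x _ hx =>
    obtain ⟨n, hn⟩ := hx
    exact ⟨-n, by rw [pairing_neg, hn, Int.cast_neg]⟩

lemma eq_of_pairing_simple_eq {x y : V} (h : ∀ j, pairing x (C.π j) = pairing y (C.π j)) :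
    x = y :=
  InnerProductSpace.ext_inner_right_basis C.simpleBasis fun j => by
    have hj := h j
    rw [pairing, pairing, div_left_inj' (C.inner_self_pos (C.simple_mem j)).ne',
      mul_right_inj' two_ne_zero] at hj
    rwa [simpleBasis_apply]

lemma eq_inv_of_apply_eq_steinberg {w : V ≃ₗ[ℝ] V} (hw : w ∈ C.W) {μ : V}
    (hμ : C.IsDominant μ) (hQw : C.PosOnOrthSimple w μ) {v : V ≃ₗ[ℝ] V} (hv : v ∈ C.W)
    (h : w μ = C.steinberg v) : v = w⁻¹ ∧ μ = C.descentWeight w := by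
  set u := v⁻¹
  have hu : u ∈ C.W := inv_mem hv
  have hμu : C.descentWeight u = μ := by
    refine C.eq_of_isDominant_of_apply_eq (mul_mem (inv_mem hw) hu)
      (C.isDominant_descentWeight u) hμ ?_
    rw [LinearEquiv.mul_apply, ← C.steinberg_eq, ← h, ← LinearEquiv.mul_apply, inv_mul_cancel,
      LinearEquiv.coe_one, id]
  have hQu : C.PosOnOrthSimple u μ := fun j hj => by
    have hpair := C.pairing_descentWeight u j
    rw [hμu, (C.pairing_simple_eq_zero_iff j).2 hj] at hpair
    refine (C.isPos_or_isNeg (C.map_mem_roots hu (C.simple_mem j))).resolve_right fun hneg => ?_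
    simp [hneg] at hpair
  have huw : u = w := hQu.eq hu hw hμ (by rw [← hμu, ← C.steinberg_eq, ← h, hμu]) hQw
  exact ⟨inv_eq_iff_eq_inv.1 huw, huw ▸ hμu.symm⟩

lemma eq_descentWeight_iff {w : V ≃ₗ[ℝ] V} {μ : V} (hμX : μ ∈ C.X) (hμ : C.IsDominant μ)
    (hQw : C.PosOnOrthSimple w μ) :
    μ = C.descentWeight w ↔
      ∀ j, pairing μ (C.π j) ≤ 1 ∧ (pairing μ (C.π j) = 1 → C.IsNeg (w (C.π j))) := by
  constructor
  · rintro rfl j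
    rw [C.pairing_descentWeight]
    split_ifs with h
    · exact ⟨le_rfl, fun _ => h⟩
    · norm_num
  · intro hcond
    refine C.eq_of_pairing_simple_eq fun j => ?_
    rw [C.pairing_descentWeight]
    obtain ⟨n, hn⟩ := C.exists_int_pairing_simple hμX j
    have h0 : (0 : ℝ) ≤ n := hn ▸ hμ j
    have h1 : (n : ℝ) ≤ 1 := hn ▸ (hcond j).1
    obtain rfl | rfl : n = 0 ∨ n = 1 := by
      have : 0 ≤ n ∧ n ≤ 1 := ⟨by exact_mod_cast h0, by exact_mod_cast h1⟩
      omega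
    · have hpos := hQw j ((C.pairing_simple_eq_zero_iff j).1 (by simpa using hn))
      rw [if_neg (C.not_isNeg_of_isPos (C.map_simple_ne_zero w j) hpos), hn, Int.cast_zero]
    · rw [if_pos ((hcond j).2 (by simpa using hn)), hn, Int.cast_one]

end RootSystemData

/-- Let `λ ∈ X`, let `λ⁺` be the dominant weight in the `W`-orbit of `λ`,
and let `w` be of minimal length with `λ = wλ⁺`.  Then `λ` is a Steinberg weight (and then
necessarily `λ = e_{w⁻¹}`) iff `(λ⁺, α_j∨) ≤ 1` for every simple `α_j`, and `w(α_j)` is a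
negative root whenever `(λ⁺, α_j∨) = 1`. -/
theorem statement_8
    {V : Type} [NormedAddCommGroup V] [InnerProductSpace ℝ V] [FiniteDimensional ℝ V]
    (C : RootSystemData V)
    (lam lamPlus : V) (hlamX : lam ∈ C.X)
    (hdom : C.IsDominant lamPlus)
    (w : V ≃ₗ[ℝ] V) (hw : w ∈ C.W) (hlam : lam = w lamPlus)
    (hmin : ∀ u ∈ C.W, u lamPlus = lam → C.length w ≤ C.length u) :
    ((∃ v ∈ C.W, lam = C.steinberg v) ↔
        ∀ j : Fin C.r, pairing lamPlus (C.π j) ≤ 1 ∧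
          (pairing lamPlus (C.π j) = 1 → C.IsNeg (w (C.π j)))) ∧
    (∀ v ∈ C.W, lam = C.steinberg v → v = w⁻¹) := by
  subst hlam
  have hQ : C.PosOnOrthSimple w lamPlus := C.posOnOrthSimple_of_length_minimal hw hmin
  have hX : lamPlus ∈ C.X := by simpa using C.X_stable _ (inv_mem hw) _ hlamX
  have hsteinberg := fun v (hv : v ∈ C.W) (h : w lamPlus = C.steinberg v) =>
    C.eq_inv_of_apply_eq_steinberg hw hdom hQ hv h
  refine ⟨⟨fun ⟨v, hv, h⟩ => (C.eq_descentWeight_iff hX hdom hQ).1 (hsteinberg v hv h).2,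
    fun hcond => ⟨w⁻¹, inv_mem hw, ?_⟩⟩, fun v hv h => (hsteinberg v hv h).1⟩
  rw [C.steinberg_eq, inv_inv, ← (C.eq_descentWeight_iff hX hdom hQ).2 hcond]
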